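/- (Fano-type lemma) Let m ≥ 1, let A_0, …, A_m be pairwise disjoint measurable events in a measurable space (Ω, 𝒜), and let P_0, …, P_m be probability measures on (Ω, 𝒜). Then sup_{0≤i≤m} P_i(A_iᶜ) ≥ min( 1/2, exp(−3e^{-1}) √m · exp(−χ_m) ), where χ_m = min_{0≤v≤m} (1/m) ∑_{k≠v} K(P_k, P_v) and K denotes the Kullback–Leibler divergence. -/

import Mathlib

/-!
Let `p = maxᵢ Pᵢ(Aᵢᶜ) < 1/2` and let `v` attain `χ_m`. Coarsening to the partition
`{A_k, A_kᶜ}` (the log-sum inequality) and `x log x ≥ -1/e` give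
`K(P_k, P_v) ≥ P_k(A_k) log(1 / P_v(A_k)) - 2/e`, where `P_k(A_k) ≥ 1 - p`. The sets `A_k`,
`k ≠ v`, are disjoint subsets of `A_vᶜ`, so by concavity of `log`,
`∑_{k ≠ v} log(1 / P_v(A_k)) ≥ m log(m / p)`. Hence `χ_m ≥ (1 - p) log(m / p) - 2/e`, which
rearranges to `p ≥ e^{-3/e} √m e^{-χ_m}` since `p ≤ 1/2` and `p log p ≥ -1/e`.
-/

open MeasureTheory

open Classical in
/-- The Kullback–Leibler divergence `K(P,Q) = ∫ log(dP/dQ) dP` if `P ≪ Q` (with the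
log density integrable), and `∞` otherwise. For probability measures it is nonnegative,
so it is naturally valued in `ℝ≥0∞`. -/
noncomputable def KLdiv {Ω : Type*} [MeasurableSpace Ω] (P Q : Measure Ω) : ENNReal :=
  if P ≪ Q ∧ Integrable (fun ω => Real.log (P.rnDeriv Q ω).toReal) P then
    ENNReal.ofReal (∫ ω, Real.log (P.rnDeriv Q ω).toReal ∂P)
  else ⊤

namespace Real

lemma neg_exp_neg_one_le_mul_log {x : ℝ} (hx : 0 ≤ x) : -exp (-1) ≤ x * log x := by
  rcases hx.eq_or_lt with rfl | hx
  · simp [(exp_pos _).le]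
  have h := add_one_le_exp (-1 - log x)
  rw [exp_sub, exp_log hx] at h
  have : x * (-log x) ≤ x * (exp (-1) / x) := by gcongr; linarith
  rw [mul_div_cancel₀ _ hx.ne'] at this
  linarith

lemma neg_exp_neg_one_le_mul_log_div {a b : ℝ} (ha : 0 ≤ a) (hb₀ : 0 ≤ b) (hb₁ : b ≤ 1) :
    -exp (-1) ≤ a * log (a / b) := by
  rcases ha.eq_or_lt with rfl | ha
  · simp [(exp_pos _).le]
  rcases hb₀.eq_or_lt with rfl | hb₀
  · simp [(exp_pos _).le]
  rw [log_div ha.ne' hb₀.ne', mul_sub]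
  have := mul_nonneg ha.le (neg_nonneg.mpr (log_nonpos hb₀.le hb₁))
  linarith [neg_exp_neg_one_le_mul_log ha.le]

lemma sum_log_le_card_mul_log_div {ι : Type*} {s : Finset ι} (hs : s.Nonempty) {b : ι → ℝ}
    (hb : ∀ i ∈ s, 0 < b i) :
    ∑ i ∈ s, log (b i) ≤ s.card * log ((∑ i ∈ s, b i) / s.card) := by
  have hcard : (0 : ℝ) < s.card := by exact_mod_cast hs.card_pos
  have h := strictConcaveOn_log_Ioi.concaveOn.le_map_sum (t := s) (w := fun _ => (s.card : ℝ)⁻¹)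
    (p := b) (fun _ _ => by positivity) (by simp [hcard.ne']) hb
  simp only [smul_eq_mul, ← Finset.mul_sum] at h
  rwa [inv_mul_eq_div, inv_mul_eq_div, div_le_iff₀' hcard] at h

lemma exp_mul_sqrt_mul_exp_neg_le {m p χ : ℝ} (hm : 1 ≤ m) (hp₀ : 0 < p) (hp : p ≤ 1 / 2)
    (hχ : (1 - p) * (log m - log p) - 2 * exp (-1) ≤ χ) :
    exp (-(3 * exp (-1))) * √m * exp (-χ) ≤ p := by
  rw [sqrt_eq_rpow, rpow_def_of_pos (by linarith), ← exp_add, ← exp_add, ← exp_log hp₀]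
  gcongr
  have := mul_nonneg (by linarith : 0 ≤ 1 / 2 - p) (log_nonneg hm)
  nlinarith [neg_exp_neg_one_le_mul_log hp₀.le]

end Real

section KullbackLeibler

open Set Function InformationTheory

variable {Ω : Type*} [MeasurableSpace Ω] {P Q : Measure Ω}

lemma MeasureTheory.Measure.AbsolutelyContinuous.measureReal_pos [IsFiniteMeasure Q] (hPQ : P ≪ Q)
    {S : Set Ω} (h : 0 < P.real S) : 0 < Q.real S := by
  refine measureReal_nonneg.lt_of_ne' fun hQ => h.ne' ?_
  rw [measureReal_eq_zero_iff] at hQ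
  simp [measureReal_def, hPQ hQ]

lemma sum_measureReal_le_measureReal_compl (μ : Measure Ω) [IsFiniteMeasure μ] {ι : Type*}
    {A : ι → Set Ω} (hA : ∀ i, MeasurableSet (A i)) (hdisj : Pairwise (Disjoint on A))
    {s : Finset ι} {v : ι} (hv : v ∉ s) :
    ∑ k ∈ s, μ.real (A k) ≤ μ.real (A v)ᶜ := by
  rw [← measureReal_biUnion_finset (hdisj.set_pairwise _) (fun k _ => hA k)]
  exact measureReal_mono <| iUnion₂_subset fun k hk =>
    subset_compl_iff_disjoint_right.mpr (hdisj (ne_of_mem_of_not_mem hk hv))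

lemma absolutelyContinuous_of_KLdiv_ne_top (h : KLdiv P Q ≠ ⊤) : P ≪ Q := by
  unfold KLdiv at h
  split_ifs at h with hc
  · exact hc.1
  · exact absurd rfl h

lemma KLdiv_eq_klDiv (h : P univ = Q univ) : KLdiv P Q = klDiv P Q := by
  rw [KLdiv, klDiv_def, measureReal_def, measureReal_def, h, add_sub_cancel_right]
  rfl

lemma rnDeriv_restrict_restrict_ae_eq [P.HaveLebesgueDecomposition Q] [SigmaFinite Q]
    (hPQ : P ≪ Q) {S : Set Ω} (hS : MeasurableSet S) :
    (P.restrict S).rnDeriv (Q.restrict S) =ᵐ[Q.restrict S] P.rnDeriv Q := by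
  conv_lhs => rw [← Measure.withDensity_rnDeriv_eq P Q hPQ, restrict_withDensity hS]
  exact Measure.rnDeriv_withDensity _ (Measure.measurable_rnDeriv P Q)

lemma mul_log_le_setIntegral_llr [IsFiniteMeasure P] [IsFiniteMeasure Q] (hPQ : P ≪ Q)
    (hint : Integrable (llr P Q) P) {S : Set Ω} (hS : MeasurableSet S) :
    P.real S * Real.log (P.real S / Q.real S) ≤ ∫ x in S, llr P Q x ∂P := by
  have hac := hPQ.restrict S
  have hllr : llr (P.restrict S) (Q.restrict S) =ᵐ[P.restrict S] llr P Q := by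
    filter_upwards [hac.ae_le (rnDeriv_restrict_restrict_ae_eq hPQ hS)] with x hx
    simp [llr, hx]
  have hint' : Integrable (llr (P.restrict S) (Q.restrict S)) (P.restrict S) :=
    hint.restrict.congr hllr.symm
  have h := mul_log_le_toReal_klDiv hac hint'
  rw [toReal_klDiv hac hint', integral_congr_ae hllr] at h
  simp only [measureReal_restrict_apply_univ] at h
  linarith

lemma mul_log_add_mul_log_le_toReal_klDiv [IsProbabilityMeasure P] [IsProbabilityMeasure Q]
    (h : klDiv P Q ≠ ⊤) {S : Set Ω} (hS : MeasurableSet S) :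
    P.real S * Real.log (P.real S / Q.real S) + P.real Sᶜ * Real.log (P.real Sᶜ / Q.real Sᶜ)
      ≤ (klDiv P Q).toReal := by
  obtain ⟨hPQ, hint⟩ := klDiv_ne_top_iff.mp h
  rw [toReal_klDiv hPQ hint, ← integral_add_compl hS hint]
  simp only [probReal_univ, add_sub_cancel_right]
  exact add_le_add (mul_log_le_setIntegral_llr hPQ hint hS)
    (mul_log_le_setIntegral_llr hPQ hint hS.compl)

lemma mul_neg_log_sub_le_toReal_KLdiv [IsProbabilityMeasure P] [IsProbabilityMeasure Q]
    (h : KLdiv P Q ≠ ⊤) {S : Set Ω} (hS : MeasurableSet S) :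
    P.real S * -Real.log (Q.real S) - 2 * Real.exp (-1) ≤ (KLdiv P Q).toReal := by
  rw [KLdiv_eq_klDiv (by simp)] at h ⊢
  have hbin := mul_log_add_mul_log_le_toReal_klDiv h hS
  rcases measureReal_nonneg.eq_or_lt with ha | ha
  · rw [← ha]
    linarith [(Real.exp_pos (-1)).le, ENNReal.toReal_nonneg (a := klDiv P Q)]
  have hb := (klDiv_ne_top_iff.mp h).1.measureReal_pos ha
  have hcompl := Real.neg_exp_neg_one_le_mul_log_div (a := P.real Sᶜ) (b := Q.real Sᶜ)
    measureReal_nonneg measureReal_nonneg measureReal_le_one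
  rw [Real.log_div ha.ne' hb.ne', mul_sub] at hbin
  linarith [Real.neg_exp_neg_one_le_mul_log ha.le]

end KullbackLeibler

section Fano

open Real Function

variable {Ω : Type*} [MeasurableSpace Ω]

theorem fano_of_KLdiv_ne_top {m : ℕ} (hm : 1 ≤ m) {A : Fin (m + 1) → Set Ω}
    (hA : ∀ i, MeasurableSet (A i)) (hdisj : Pairwise (Disjoint on A))
    {P : Fin (m + 1) → Measure Ω} [∀ i, IsProbabilityMeasure (P i)] {p : ℝ} (hp : p ≤ 1 / 2)
    (hpA : ∀ i, (P i).real (A i)ᶜ ≤ p) (v : Fin (m + 1))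
    (hK : ∀ k ∈ Finset.univ.erase v, KLdiv (P k) (P v) ≠ ⊤) :
    exp (-(3 * exp (-1))) * √m *
      exp (-((m : ℝ)⁻¹ * ∑ k ∈ Finset.univ.erase v, (KLdiv (P k) (P v)).toReal)) ≤ p := by
  set E := Finset.univ.erase v
  set b := fun k => (P v).real (A k)
  have hE : E.card = m := by simp [E, Finset.card_erase_of_mem]
  have hEne : E.Nonempty := by rw [← Finset.card_pos, hE]; omega
  have hm₀ : (0 : ℝ) < m := by exact_mod_cast hm
  have hlarge : ∀ k, 1 - p ≤ (P k).real (A k) := fun k => by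
    have := measureReal_add_measureReal_compl (μ := P k) (hA k)
    simp only [probReal_univ] at this
    linarith [hpA k]
  have hb : ∀ k ∈ E, 0 < b k := fun k hk =>
    (absolutelyContinuous_of_KLdiv_ne_top (hK k hk)).measureReal_pos (by linarith [hlarge k])
  have hsum : ∑ k ∈ E, b k ≤ p :=
    (sum_measureReal_le_measureReal_compl _ hA hdisj (Finset.notMem_erase v _)).trans (hpA v)
  have hp₀ : 0 < p := (Finset.sum_pos hb hEne).trans_le hsum
  have hjensen : (m : ℝ) * (log m - log p) ≤ ∑ k ∈ E, -log (b k) := by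
    have h := sum_log_le_card_mul_log_div hEne hb
    have hmono : log ((∑ k ∈ E, b k) / m) ≤ log (p / m) :=
      log_le_log (div_pos (Finset.sum_pos hb hEne) hm₀) (by gcongr)
    rw [hE] at h
    rw [log_div hp₀.ne' hm₀.ne'] at hmono
    rw [Finset.sum_neg_distrib]
    linarith [mul_le_mul_of_nonneg_left hmono hm₀.le]
  have hKk : ∀ k ∈ E, (1 - p) * -log (b k) - 2 * exp (-1) ≤ (KLdiv (P k) (P v)).toReal :=
    fun k hk => by
      have hlog : 0 ≤ -log (b k) :=
        neg_nonneg.mpr (log_nonpos measureReal_nonneg measureReal_le_one)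
      have := mul_neg_log_sub_le_toReal_KLdiv (hK k hk) (hA k)
      linarith [mul_le_mul_of_nonneg_right (hlarge k) hlog]
  refine exp_mul_sqrt_mul_exp_neg_le (by exact_mod_cast hm) hp₀ hp ?_
  calc (1 - p) * (log m - log p) - 2 * exp (-1)
      = (m : ℝ)⁻¹ * ((1 - p) * (m * (log m - log p)) - m * (2 * exp (-1))) := by
        field_simp
    _ ≤ (m : ℝ)⁻¹ * ∑ k ∈ E, ((1 - p) * -log (b k) - 2 * exp (-1)) := by
        rw [Finset.sum_sub_distrib, ← Finset.mul_sum, Finset.sum_const, hE, nsmul_eq_mul]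
        gcongr
        linarith
    _ ≤ (m : ℝ)⁻¹ * ∑ k ∈ E, (KLdiv (P k) (P v)).toReal := by
        gcongr with k hk
        exact hKk k hk

end Fano

/-- Fano-type lemma: for pairwise disjoint events `A₀,…,A_m` and
probability measures `P₀,…,P_m`,
`sup_i P_i(A_iᶜ) ≥ min(1/2, exp(−3e⁻¹) √m exp(−χ_m))`, where
`χ_m = min_v (1/m) ∑_{k≠v} K(P_k, P_v)` (and `exp(−χ_m) = 0` when `χ_m = ∞`). -/
theorem stmt9 {Ω : Type*} [MeasurableSpace Ω] (m : ℕ) (hm : 1 ≤ m)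
    (A : Fin (m + 1) → Set Ω) (hA : ∀ i, MeasurableSet (A i))
    (hdisj : ∀ i j, i ≠ j → A i ∩ A j = ∅)
    (P : Fin (m + 1) → Measure Ω) (hP : ∀ i, IsProbabilityMeasure (P i)) :
    ENNReal.ofReal
        (min (1 / 2)
          (Real.exp (-(3 * Real.exp (-1))) * Real.sqrt m *
            (if (⨅ v, (m : ENNReal)⁻¹ * ∑ k ∈ Finset.univ.erase v, KLdiv (P k) (P v)) = ⊤
              then 0
              else Real.exp
                (-(⨅ v, (m : ENNReal)⁻¹ *
                    ∑ k ∈ Finset.univ.erase v, KLdiv (P k) (P v)).toReal))))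
      ≤ ⨆ i, P i (A i)ᶜ := by
  set p := ⨆ i, P i (A i)ᶜ
  have hp_ne_top : p ≠ ⊤ := ne_top_of_le_ne_top ENNReal.one_ne_top (iSup_le fun i => prob_le_one)
  rcases le_or_gt (ENNReal.ofReal (1 / 2)) p with hhalf | hhalf
  · exact (ENNReal.ofReal_le_ofReal (min_le_left _ _)).trans hhalf
  split_ifs with htop
  · simp
  obtain ⟨v, hv⟩ := exists_eq_ciInf_of_finite
    (f := fun v => (m : ENNReal)⁻¹ * ∑ k ∈ Finset.univ.erase v, KLdiv (P k) (P v))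
  have hK : ∀ k ∈ Finset.univ.erase v, KLdiv (P k) (P v) ≠ ⊤ := by
    refine ENNReal.sum_ne_top.mp fun h => htop ?_
    rw [← hv, h, ENNReal.mul_top (by simp)]
  rw [← hv, ENNReal.toReal_mul, ENNReal.toReal_inv, ENNReal.toReal_natCast,
    ENNReal.toReal_sum hK, ← ENNReal.ofReal_toReal hp_ne_top]
  refine ENNReal.ofReal_le_ofReal ((min_le_right _ _).trans ?_)
  exact fano_of_KLdiv_ne_top hm hA
    (fun i j hij => Set.disjoint_iff_inter_eq_empty.mpr (hdisj i j hij))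
    ((ENNReal.lt_ofReal_iff_toReal_lt hp_ne_top).mp hhalf).le
    (fun i => ENNReal.toReal_mono hp_ne_top (le_iSup (fun i => P i (A i)ᶜ) i)) v hK
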